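/- Let G be a locally compact second countable group and K a compact group. If Q is a discrete (closed) subgroup of G × K, then the projection of Q to G is a discrete subgroup of G. -/

import Mathlib

/-!
Since `K` is compact, `Prod.fst : G × K → G` pulls compact sets back to compact sets, so a closed
discrete subset of `G × K` meets the preimage of every compact subset of `G` in a finite set, and
hence its image meets every compact subset of `G` in a finite set. In a locally compact `T₁` space
such a set is discrete, and `G` is `T₁` because the closed discrete subgroup `Q` makes `{1}`
closed in `G × K`.
-/

open Filter Topology

section

variable {X Y : Type*} [TopologicalSpace X] [TopologicalSpace Y]

theorem tendsto_fst_cocompact_of_compactSpace [CompactSpace Y] :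
    Tendsto (Prod.fst : X × Y → X) (cocompact (X × Y)) (cocompact X) := by
  refine hasBasis_cocompact.tendsto_right_iff.mpr fun C hC => ?_
  have hCY := (hC.prod (isCompact_univ (X := Y))).compl_mem_cocompact
  rwa [Set.prod_univ, ← Set.preimage_compl] at hCY

theorem IsClosed.isDiscrete_image_fst [T1Space X] [WeaklyLocallyCompactSpace X] [CompactSpace Y]
    {s : Set (X × Y)} (hs : IsClosed s) (hd : IsDiscrete s) : IsDiscrete (Prod.fst '' s) := by
  have hfst : Tendsto (((↑) : Prod.fst '' s → X) ∘ Set.imageFactorization Prod.fst s) cofinite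
      (cocompact X) :=
    tendsto_fst_cocompact_of_compactSpace.comp (hs.tendsto_coe_cofinite_of_isDiscrete hd)
  have himage : Tendsto ((↑) : Prod.fst '' s → X) cofinite (cocompact X) :=
    (tendsto_map'_iff.mpr hfst).mono_left Set.imageFactorization_surjective.le_map_cofinite
  exact ⟨continuous_subtype_val.discrete_of_tendsto_cofinite_cocompact himage⟩

end

theorem stmt1_general {G K : Type*} [Group G] [TopologicalSpace G] [IsTopologicalGroup G]
    [LocallyCompactSpace G]
    [Group K] [TopologicalSpace K] [CompactSpace K]
    (Q : Subgroup (G × K)) (hQclosed : IsClosed (Q : Set (G × K)))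
    (hQdisc : DiscreteTopology Q) :
    DiscreteTopology (Q.map (MonoidHom.fst G K)) := by
  have hone : IsClosed ({1} : Set (G × K)) :=
    isClosed_of_subset_discrete_closed (by simp [Q.one_mem]) ⟨hQdisc⟩ hQclosed
  have hpre : (fun g : G => (g, (1 : K))) ⁻¹' {1} = {1} := by ext; simp [Prod.ext_iff]
  have : T1Space G := IsTopologicalGroup.t1Space G <| hpre ▸
    hone.preimage (continuous_id.prodMk (continuous_const (y := (1 : K))))
  rw [← SetLike.isDiscrete_iff_discreteTopology, Subgroup.coe_map, MonoidHom.coe_fst]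
  exact hQclosed.isDiscrete_image_fst ⟨hQdisc⟩

/-- If `Q` is a discrete closed subgroup of `G × K` with `G` a locally compact
second countable group and `K` a compact group, then the projection of `Q` to
`G` is a discrete subgroup of `G`. -/
theorem stmt1 {G K : Type*} [Group G] [TopologicalSpace G] [IsTopologicalGroup G]
    [LocallyCompactSpace G] [SecondCountableTopology G]
    [Group K] [TopologicalSpace K] [IsTopologicalGroup K] [CompactSpace K]
    (Q : Subgroup (G × K)) (hQclosed : IsClosed (Q : Set (G × K)))
    (hQdisc : DiscreteTopology Q) :
    DiscreteTopology (Q.map (MonoidHom.fst G K)) :=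
  stmt1_general Q hQclosed hQdisc
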